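/- arXiv:1203.0463 — 3 statements merged into one kernel-verified Lean document; each statement's English description precedes it below -/
import Mathlib

section
/- Let K(ξ) = exp(ξ²/(4ν)) for ν > 0. There exists a constant C > 0 such that for all u ∈ H¹(K), ∫_ℝ |u(ξ)|² ξ² K(ξ) dξ ≤ C ∫_ℝ |u'(ξ)|² K(ξ) dξ. -/
/-!
With `K x = exp (c x²)` and `c = 1/(4ν)`, expanding `(u' + c x u)² K ≥ 0` gives, pointwise,
`c² x² u² K ≤ u'² K + c (x u² K)' `. Integrating over `[b, a]` bounds `c² ∫_b^a x² u² K` by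
`∫ u'² K` plus the boundary term `c (a u(a)² K(a) - b u(b)² K(b))`. Since `u² K` is integrable,
`x u(x)² K(x)` cannot stay above any `ε > 0` near `+∞` (nor below `-ε` near `-∞`), as `1/x` is not
integrable there; so the endpoints can be chosen to make the boundary term arbitrarily small.
-/

open MeasureTheory Real Filter Set

theorem frequently_atTop_mul_le_of_integrableOn_Ioi {f : ℝ → ℝ} {m ε : ℝ}
    (hf : IntegrableOn f (Ioi m)) (hε : 0 < ε) : ∃ᶠ x in atTop, x * f x ≤ ε := by
  intro hlarge
  obtain ⟨N, hN⟩ := eventually_atTop.1 (hlarge.mono fun x hx => lt_of_not_ge hx)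
  set m' := max (max N m) 1
  have hm' : 0 < m' := zero_lt_one.trans_le (le_max_right _ _)
  have hinv : IntegrableOn (fun x => ε * x⁻¹) (Ioi m') := by
    refine (hf.mono_set (Ioi_subset_Ioi ((le_max_right N m).trans (le_max_left _ _)))).mono'
      (by fun_prop) ((ae_restrict_iff' measurableSet_Ioi).2 (.of_forall fun x hx => ?_))
    have hx0 : 0 < x := hm'.trans hx
    have := hN x (((le_max_left N m).trans (le_max_left _ _)).trans (le_of_lt hx))
    rw [norm_of_nonneg (by positivity), ← div_eq_mul_inv, div_le_iff₀ hx0]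
    linarith
  have h := hinv.const_mul ε⁻¹
  simp only [← mul_assoc, inv_mul_cancel₀ hε.ne', one_mul] at h
  exact not_integrableOn_Ioi_inv h

theorem frequently_atBot_neg_le_mul_of_integrableOn_Iio {f : ℝ → ℝ} {m ε : ℝ}
    (hf : IntegrableOn f (Iio m)) (hε : 0 < ε) : ∃ᶠ x in atBot, -ε ≤ x * f x := by
  have hneg : IntegrableOn (fun x => f (-x)) (Ioi (-m)) := by
    simpa using hf.comp_neg
  refine tendsto_neg_atTop_atBot.frequently
    ((frequently_atTop_mul_le_of_integrableOn_Ioi hneg hε).mono fun x hx => ?_)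
  linarith

theorem integral_le_of_forall_intervalIntegral_le {g : ℝ → ℝ} {M : ℝ} (hM : 0 ≤ M)
    (h : ∀ n : ℕ, ∫ x in -(n : ℝ)..n, g x ≤ M) : ∫ x, g x ≤ M := by
  by_cases hg : Integrable g
  · exact le_of_tendsto (intervalIntegral_tendsto_integral hg
      (tendsto_neg_atTop_atBot.comp tendsto_natCast_atTop_atTop) tendsto_natCast_atTop_atTop)
      (.of_forall h)
  · rwa [integral_undef hg]

theorem hasDerivAt_exp_mul_sq (c x : ℝ) :
    HasDerivAt (fun x => exp (c * x ^ 2)) (2 * c * x * exp (c * x ^ 2)) x := by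
  convert ((hasDerivAt_pow 2 x).const_mul c).exp using 1
  ring

section GaussianWeight

variable {c : ℝ} {u : ℝ → ℝ}

theorem hasDerivAt_mul_sq_mul_exp_mul_sq (hu : Differentiable ℝ u) (x : ℝ) :
    HasDerivAt (fun x => x * (u x ^ 2 * exp (c * x ^ 2)))
      (u x ^ 2 * exp (c * x ^ 2) + 2 * x * u x * deriv u x * exp (c * x ^ 2)
        + 2 * c * x ^ 2 * u x ^ 2 * exp (c * x ^ 2)) x := by
  refine ((hasDerivAt_id' x).fun_mul
    (((hu x).hasDerivAt.fun_pow 2).fun_mul (hasDerivAt_exp_mul_sq c x))).congr_deriv ?_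
  push_cast
  ring

theorem sq_mul_intervalIntegral_le_add_boundary (hc : 0 ≤ c) (hu : Differentiable ℝ u)
    (hu' : Integrable fun x => deriv u x ^ 2 * exp (c * x ^ 2)) {a b : ℝ} (hba : b ≤ a) :
    c ^ 2 * ∫ x in b..a, u x ^ 2 * x ^ 2 * exp (c * x ^ 2)
      ≤ (∫ x, deriv u x ^ 2 * exp (c * x ^ 2))
        + c * (a * (u a ^ 2 * exp (c * a ^ 2)) - b * (u b ^ 2 * exp (c * b ^ 2))) := by
  have hcont : Continuous fun x => u x ^ 2 * x ^ 2 * exp (c * x ^ 2) := by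
    have := hu.continuous; fun_prop
  have hpointwise : ∀ x, c ^ 2 * (u x ^ 2 * x ^ 2 * exp (c * x ^ 2))
      - deriv u x ^ 2 * exp (c * x ^ 2)
      ≤ c * (u x ^ 2 * exp (c * x ^ 2) + 2 * x * u x * deriv u x * exp (c * x ^ 2)
        + 2 * c * x ^ 2 * u x ^ 2 * exp (c * x ^ 2)) := fun x => by
    have hE := (exp_pos (c * x ^ 2)).le
    nlinarith [mul_nonneg (sq_nonneg (deriv u x + c * x * u x)) hE,
      mul_nonneg (mul_nonneg hc (sq_nonneg (u x))) hE]
  have hFTC := intervalIntegral.integral_le_sub_of_hasDeriv_right_of_le hba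
    (g := fun x => c * (x * (u x ^ 2 * exp (c * x ^ 2))))
    (φ := fun x => c ^ 2 * (u x ^ 2 * x ^ 2 * exp (c * x ^ 2)) - deriv u x ^ 2 * exp (c * x ^ 2))
    (by have := hu.continuous; fun_prop)
    (fun x _ => ((hasDerivAt_mul_sq_mul_exp_mul_sq hu x).const_mul c).hasDerivWithinAt)
    (((hcont.const_mul _).integrableOn_Icc).sub hu'.integrableOn) (fun x _ => hpointwise x)
  rw [intervalIntegral.integral_sub ((hcont.const_mul _).intervalIntegrable _ _)
    hu'.intervalIntegrable, intervalIntegral.integral_const_mul] at hFTC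
  have hpart : ∫ x in b..a, deriv u x ^ 2 * exp (c * x ^ 2)
      ≤ ∫ x, deriv u x ^ 2 * exp (c * x ^ 2) := by
    rw [intervalIntegral.integral_of_le hba]
    exact setIntegral_le_integral hu' (.of_forall fun x => by positivity)
  linarith

theorem sq_mul_intervalIntegral_neg_le_integral_deriv (hc : 0 < c) (hu : Differentiable ℝ u)
    (hu₀ : Integrable fun x => u x ^ 2 * exp (c * x ^ 2))
    (hu' : Integrable fun x => deriv u x ^ 2 * exp (c * x ^ 2)) {r : ℝ} (hr : 0 ≤ r) :
    c ^ 2 * ∫ x in -r..r, u x ^ 2 * x ^ 2 * exp (c * x ^ 2)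
      ≤ ∫ x, deriv u x ^ 2 * exp (c * x ^ 2) := by
  refine le_of_forall_pos_le_add fun ε hε => ?_
  have hε' : 0 < ε / (2 * c) := by positivity
  obtain ⟨a, hFa, hra⟩ := ((frequently_atTop_mul_le_of_integrableOn_Ioi
    (m := 0) hu₀.integrableOn hε').and_eventually (eventually_ge_atTop r)).exists
  obtain ⟨b, hFb, hbr⟩ := ((frequently_atBot_neg_le_mul_of_integrableOn_Iio
    (m := 0) hu₀.integrableOn hε').and_eventually (eventually_le_atBot (-r))).exists
  have hcont : Continuous fun x => u x ^ 2 * x ^ 2 * exp (c * x ^ 2) := by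
    have := hu.continuous; fun_prop
  have hmono : ∫ x in -r..r, u x ^ 2 * x ^ 2 * exp (c * x ^ 2)
      ≤ ∫ x in b..a, u x ^ 2 * x ^ 2 * exp (c * x ^ 2) :=
    intervalIntegral.integral_mono_interval hbr (by linarith) hra
      (.of_forall fun x => by positivity) (hcont.intervalIntegrable _ _)
  have hboundary := sq_mul_intervalIntegral_le_add_boundary hc.le hu hu' (a := a) (b := b)
    (by linarith)
  have hεc : c * (ε / (2 * c)) = ε / 2 := by field_simp
  nlinarith [mul_le_mul_of_nonneg_left hmono (sq_nonneg c)]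

theorem sq_mul_integral_le_integral_deriv (hc : 0 < c) (hu : Differentiable ℝ u)
    (hu₀ : Integrable fun x => u x ^ 2 * exp (c * x ^ 2))
    (hu' : Integrable fun x => deriv u x ^ 2 * exp (c * x ^ 2)) :
    ∫ x, u x ^ 2 * x ^ 2 * exp (c * x ^ 2)
      ≤ (c ^ 2)⁻¹ * ∫ x, deriv u x ^ 2 * exp (c * x ^ 2) := by
  refine integral_le_of_forall_intervalIntegral_le
    (mul_nonneg (by positivity) (integral_nonneg fun x => by positivity)) fun n => ?_
  rw [le_inv_mul_iff₀ (by positivity)]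
  exact sq_mul_intervalIntegral_neg_le_integral_deriv hc hu hu₀ hu' n.cast_nonneg

end GaussianWeight

/-- There is `C > 0` with `∫ u² ξ² K ≤ C ∫ (u')² K` for all `u ∈ H¹(K)`,
where `K ξ = exp (ξ²/(4ν))`. -/
theorem stmt1 (ν : ℝ) (hν : 0 < ν)
    (K : ℝ → ℝ) (hK : ∀ ξ, K ξ = Real.exp (ξ ^ 2 / (4 * ν))) :
    ∃ C > (0 : ℝ), ∀ u : ℝ → ℝ, Differentiable ℝ u →
      Integrable (fun ξ => u ξ ^ 2 * K ξ) →
      Integrable (fun ξ => (deriv u ξ) ^ 2 * K ξ) →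
      ∫ ξ, u ξ ^ 2 * ξ ^ 2 * K ξ ≤ C * ∫ ξ, (deriv u ξ) ^ 2 * K ξ := by
  obtain rfl : K = fun ξ => exp ((4 * ν)⁻¹ * ξ ^ 2) :=
    funext fun ξ => by rw [hK, div_eq_inv_mul]
  exact ⟨((4 * ν)⁻¹ ^ 2)⁻¹, by positivity, fun u hu hu₀ hu' =>
    sq_mul_integral_le_integral_deriv (by positivity) hu hu₀ hu'⟩
end

section
/- Let K(ξ) = exp(ξ²/(4ν)) for ν > 0. If u ∈ H¹(K), then the function ξ ↦ K(ξ)^{1/2} u(ξ) belongs to L^∞(ℝ), i.e. is essentially bounded. -/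
/-!
Write `g = u² K`. Then `g' = 2 u u' K + u² K'`, and `|2 u u' K| ≤ (u² + u'²) K`. For a weight that
grows away from the origin (`ξ K'(ξ) ≥ 0`, as for the Gaussian weight `exp (ξ² / 4ν)`) the term
`u² K'` has the sign of `ξ`, so on `[0, ∞)` we get `-g' ≤ (u² + u'²) K` and on `(-∞, 0]` we get
`g' ≤ (u² + u'²) K`. Integrating from `x` towards infinity gives `g x ≤ g y + ‖u‖²_{H¹(K)}` for
every `y` farther out than `x`; since `g` is integrable it is small somewhere on every half-line,
hence `g x ≤ ‖u‖²_{H¹(K)}` everywhere.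
-/

open MeasureTheory Real Set

theorem MeasureTheory.Integrable.exists_norm_lt_of_measure_eq_top {α E : Type*}
    [MeasurableSpace α] {μ : Measure α} [NormedAddCommGroup E] {f : α → E} (hf : Integrable f μ)
    {s : Set α} (hs : μ s = ⊤) {ε : ℝ} (hε : 0 < ε) : ∃ y ∈ s, ‖f y‖ < ε := by
  by_contra! hge
  have : μ s ≤ μ {y | ε ≤ ‖f y‖} := measure_mono hge
  exact (hs ▸ this).not_gt (hf.measure_norm_ge_lt_top hε)

theorem MeasureTheory.Integrable.le_of_forall_le_add {α : Type*} [MeasurableSpace α]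
    {μ : Measure α} {f : α → ℝ} (hf : Integrable f μ) {s : Set α} (hs : μ s = ⊤) {a A : ℝ}
    (h : ∀ y ∈ s, a ≤ f y + A) : a ≤ A := by
  refine le_of_forall_pos_lt_add fun ε hε => ?_
  obtain ⟨y, hys, hy⟩ := hf.exists_norm_lt_of_measure_eq_top hs hε
  linarith [h y hys, le_abs_self (f y), Real.norm_eq_abs (f y)]

theorem intervalIntegral_le_integral_of_nonneg {f : ℝ → ℝ} (hf : Integrable f) (hf0 : ∀ ξ, 0 ≤ f ξ)
    {a b : ℝ} (hab : a ≤ b) : ∫ ξ in a..b, f ξ ≤ ∫ ξ, f ξ := by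
  rw [intervalIntegral.integral_of_le hab]
  exact setIntegral_le_integral hf (Filter.Eventually.of_forall hf0)

theorem abs_two_mul_mul_mul_le {a b k : ℝ} (hk : 0 ≤ k) :
    |2 * a * b * k| ≤ a ^ 2 * k + b ^ 2 * k := by
  rw [abs_le]
  constructor
  · nlinarith [mul_le_mul_of_nonneg_right (two_mul_le_add_sq (-a) b) hk]
  · nlinarith [mul_le_mul_of_nonneg_right (two_mul_le_add_sq a b) hk]

section WeightedSobolev

variable {K u : ℝ → ℝ}

theorem hasDerivAt_sq_mul (hK : Differentiable ℝ K) (hu : Differentiable ℝ u) (ξ : ℝ) :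
    HasDerivAt (fun ξ => u ξ ^ 2 * K ξ)
      (2 * u ξ * deriv u ξ * K ξ + u ξ ^ 2 * deriv K ξ) ξ := by
  have h : HasDerivAt (fun ξ => u ξ ^ 2 * K ξ) _ ξ :=
    ((hu ξ).hasDerivAt.pow 2).mul (hK ξ).hasDerivAt
  convert h using 1
  norm_num

theorem intervalIntegral_sq_mul_add_le_integral (hK0 : ∀ ξ, 0 ≤ K ξ)
    (hu2 : Integrable fun ξ => u ξ ^ 2 * K ξ)
    (hu2' : Integrable fun ξ => deriv u ξ ^ 2 * K ξ) {a b : ℝ} (hab : a ≤ b) :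
    ∫ ξ in a..b, (u ξ ^ 2 * K ξ + deriv u ξ ^ 2 * K ξ) ≤
      ∫ ξ, (u ξ ^ 2 * K ξ + deriv u ξ ^ 2 * K ξ) :=
  intervalIntegral_le_integral_of_nonneg (hu2.add hu2')
    (fun ξ => add_nonneg (mul_nonneg (sq_nonneg _) (hK0 ξ)) (mul_nonneg (sq_nonneg _) (hK0 ξ))) hab

theorem sq_mul_sub_le_integral_of_nonneg (hK0 : ∀ ξ, 0 ≤ K ξ) (hK : Differentiable ℝ K)
    (hK' : ∀ ξ, 0 ≤ ξ * deriv K ξ) (hu : Differentiable ℝ u)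
    (hu2 : Integrable fun ξ => u ξ ^ 2 * K ξ)
    (hu2' : Integrable fun ξ => deriv u ξ ^ 2 * K ξ) {a b : ℝ} (ha : 0 ≤ a) (hab : a ≤ b) :
    u a ^ 2 * K a - u b ^ 2 * K b ≤ ∫ ξ, (u ξ ^ 2 * K ξ + deriv u ξ ^ 2 * K ξ) := by
  have hg : Differentiable ℝ fun ξ => -(u ξ ^ 2 * K ξ) := ((hu.pow 2).mul hK).neg
  calc u a ^ 2 * K a - u b ^ 2 * K b = -(u b ^ 2 * K b) - -(u a ^ 2 * K a) := by ring
    _ ≤ ∫ ξ in a..b, (u ξ ^ 2 * K ξ + deriv u ξ ^ 2 * K ξ) := by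
      refine intervalIntegral.sub_le_integral_of_hasDeriv_right_of_le hab
        hg.continuous.continuousOn
        (fun ξ _ => ((hasDerivAt_sq_mul hK hu ξ).neg).hasDerivWithinAt)
        (hu2.add hu2').integrableOn fun ξ hξ => ?_
      have hK'ξ : 0 ≤ deriv K ξ := nonneg_of_mul_nonneg_right (hK' ξ) (ha.trans_lt hξ.1)
      have := abs_le.1 (abs_two_mul_mul_mul_le (a := u ξ) (b := deriv u ξ) (hK0 ξ))
      nlinarith [mul_nonneg (sq_nonneg (u ξ)) hK'ξ]
    _ ≤ _ := intervalIntegral_sq_mul_add_le_integral hK0 hu2 hu2' hab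

theorem sq_mul_sub_le_integral_of_nonpos (hK0 : ∀ ξ, 0 ≤ K ξ) (hK : Differentiable ℝ K)
    (hK' : ∀ ξ, 0 ≤ ξ * deriv K ξ) (hu : Differentiable ℝ u)
    (hu2 : Integrable fun ξ => u ξ ^ 2 * K ξ)
    (hu2' : Integrable fun ξ => deriv u ξ ^ 2 * K ξ) {a b : ℝ} (hb : b ≤ 0) (hab : a ≤ b) :
    u b ^ 2 * K b - u a ^ 2 * K a ≤ ∫ ξ, (u ξ ^ 2 * K ξ + deriv u ξ ^ 2 * K ξ) := by
  refine le_trans ?_ (intervalIntegral_sq_mul_add_le_integral hK0 hu2 hu2' hab)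
  refine intervalIntegral.sub_le_integral_of_hasDeriv_right_of_le hab
    ((hu.pow 2).mul hK).continuous.continuousOn
    (fun ξ _ => (hasDerivAt_sq_mul hK hu ξ).hasDerivWithinAt) (hu2.add hu2').integrableOn
    fun ξ hξ => ?_
  have hK'ξ : deriv K ξ ≤ 0 := nonpos_of_mul_nonneg_right (hK' ξ) (hξ.2.trans_le hb)
  have := abs_le.1 (abs_two_mul_mul_mul_le (a := u ξ) (b := deriv u ξ) (hK0 ξ))
  nlinarith [mul_nonpos_of_nonneg_of_nonpos (sq_nonneg (u ξ)) hK'ξ]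

theorem sq_mul_le_integral (hK0 : ∀ ξ, 0 ≤ K ξ) (hK : Differentiable ℝ K)
    (hK' : ∀ ξ, 0 ≤ ξ * deriv K ξ) (hu : Differentiable ℝ u)
    (hu2 : Integrable fun ξ => u ξ ^ 2 * K ξ)
    (hu2' : Integrable fun ξ => deriv u ξ ^ 2 * K ξ) (x : ℝ) :
    u x ^ 2 * K x ≤ ∫ ξ, (u ξ ^ 2 * K ξ + deriv u ξ ^ 2 * K ξ) := by
  rcases le_total 0 x with hx | hx
  · exact hu2.le_of_forall_le_add Real.volume_Ici fun y hy => by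
      linarith [sq_mul_sub_le_integral_of_nonneg hK0 hK hK' hu hu2 hu2' hx hy]
  · exact hu2.le_of_forall_le_add Real.volume_Iic fun y hy => by
      linarith [sq_mul_sub_le_integral_of_nonpos hK0 hK hK' hu hu2 hu2' hx hy]

end WeightedSobolev

/-- If `u ∈ H¹(K)` with `K ξ = exp (ξ²/(4ν))`, then `K^{1/2} u ∈ L^∞(ℝ)`,
i.e. `ξ ↦ √(K ξ) * u ξ` is essentially bounded. -/
theorem stmt2 (ν : ℝ) (hν : 0 < ν)
    (K : ℝ → ℝ) (hK : ∀ ξ, K ξ = Real.exp (ξ ^ 2 / (4 * ν)))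
    (u : ℝ → ℝ) (hu : Differentiable ℝ u)
    (hu2 : Integrable (fun ξ => u ξ ^ 2 * K ξ))
    (hu2' : Integrable (fun ξ => (deriv u ξ) ^ 2 * K ξ)) :
    ∃ M : ℝ, ∀ᵐ ξ : ℝ, |Real.sqrt (K ξ) * u ξ| ≤ M := by
  obtain rfl : K = fun ξ => exp (ξ ^ 2 / (4 * ν)) := funext hK
  have hKd (ξ : ℝ) : HasDerivAt (fun ξ => exp (ξ ^ 2 / (4 * ν)))
      (ξ / (2 * ν) * exp (ξ ^ 2 / (4 * ν))) ξ := by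
    convert ((hasDerivAt_pow 2 ξ).div_const (4 * ν)).exp using 1
    ring
  have hK' (ξ : ℝ) : 0 ≤ ξ * deriv (fun ξ => exp (ξ ^ 2 / (4 * ν))) ξ := by
    rw [(hKd ξ).deriv, ← mul_assoc, mul_div, ← sq]
    positivity
  refine ⟨√(∫ ξ, (u ξ ^ 2 * exp (ξ ^ 2 / (4 * ν)) + deriv u ξ ^ 2 * exp (ξ ^ 2 / (4 * ν)))),
    Filter.Eventually.of_forall fun ξ => ?_⟩
  rw [← sqrt_sq_eq_abs, mul_pow, sq_sqrt (exp_pos _).le, mul_comm]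
  exact sqrt_le_sqrt (sq_mul_le_integral (fun _ => (exp_pos _).le)
    (fun ξ => (hKd ξ).differentiableAt) hK' hu hu2 hu2' ξ)
end

section
/- Let K(ξ) = exp(ξ²/(4ν)) with ν > 0. For any q > 2 and any ε > 0, there exist constants C > 0 and R > 0 such that for all u ∈ H¹(K), ∫_ℝ |u|² K dξ ≤ ε ∫_ℝ |u'|² K dξ + C (∫_{-R}^{R} |u|^q dξ)^{2/q}. -/
/-!
Split `ℝ` at `±R`. On the right tail, integrating `(u² K)' = 2 u u' K + (ξ / 2ν) u² K` over
`[R, T]`, where `T` is a point at which `u² K` is small, shows that `∫_{ξ > R} (ξ / 2ν) u² K`, and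
hence `∫_{ξ > R} u² K`, is at most `2ν / R · ∫ (u² + u'²) K`; the left tail is its mirror image.
For `R` large both tails are absorbed into the left-hand side. On `(-R, R)` the weight is at most
`K R`, and Hölder's inequality bounds `∫ u²` by the `L^q` norm of `u`.
-/

open MeasureTheory Real Set Filter

theorem MeasureTheory.Integrable.frequently_atTop_lt {f : ℝ → ℝ} (hf : Integrable f) {δ : ℝ}
    (hδ : 0 < δ) : ∃ᶠ x in atTop, f x < δ := by
  refine frequently_atTop.mpr fun T => ?_
  by_contra! hge
  have hconst : IntegrableOn (fun _ => δ) (Ioi T) :=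
    hf.integrableOn.mono' aestronglyMeasurable_const <|
      (ae_restrict_iff' measurableSet_Ioi).mpr <| Eventually.of_forall fun x hx => by
        rw [norm_of_nonneg hδ.le]; exact hge x hx.le
  simp [integrableOn_const_iff, hδ.ne'] at hconst

theorem integrableOn_Ioi_and_integral_le_of_intervalIntegral_le {g : ℝ → ℝ} {a C : ℝ}
    (hg : Continuous g) (hg0 : ∀ x, a ≤ x → 0 ≤ g x)
    (hC : ∀ b, a ≤ b → ∫ x in a..b, g x ≤ C) :
    IntegrableOn g (Ioi a) ∧ ∫ x in Ioi a, g x ≤ C := by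
  have hnorm : ∀ b, a ≤ b → ∫ x in a..b, ‖g x‖ = ∫ x in a..b, g x := fun b hb =>
    intervalIntegral.integral_congr fun x hx => by
      rw [uIcc_of_le hb] at hx
      exact norm_of_nonneg (hg0 x hx.1)
  have hint : IntegrableOn g (Ioi a) :=
    integrableOn_Ioi_of_intervalIntegral_norm_bounded C a (fun _ => hg.integrableOn_Ioc)
      tendsto_id ((eventually_ge_atTop a).mono fun b hb => (hnorm b hb).trans_le (hC b hb))
  exact ⟨hint, le_of_tendsto (intervalIntegral_tendsto_integral_Ioi a hint tendsto_id)
    ((eventually_ge_atTop a).mono hC)⟩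

/-- Integrate `f' = h + g` up to a point `c ≥ b` where `f c` is small (one exists since `f` is
integrable); then `∫ a..b, g ≤ ∫ a..c, g ≤ f c - f a + ∫ ‖h‖`. -/
theorem intervalIntegral_le_integral_norm_of_hasDerivAt {f g h : ℝ → ℝ} {a b : ℝ} (hab : a ≤ b)
    (hf : Integrable f) (hfa : 0 ≤ f a) (hderiv : ∀ x, a ≤ x → HasDerivAt f (h x + g x) x)
    (hh : Integrable h) (hg : Continuous g) (hg0 : ∀ x, a ≤ x → 0 ≤ g x) :
    ∫ x in a..b, g x ≤ ∫ x, ‖h x‖ := by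
  refine le_of_forall_pos_le_add fun δ hδ => ?_
  obtain ⟨c, hbc, hfc⟩ := frequently_atTop.mp (hf.frequently_atTop_lt hδ) b
  have hac : a ≤ c := hab.trans hbc
  have hftc : ∫ x in a..c, (h x + g x) = f c - f a :=
    intervalIntegral.integral_eq_sub_of_hasDerivAt
      (fun x hx => hderiv x (by rw [uIcc_of_le hac] at hx; exact hx.1))
      (hh.intervalIntegrable.add (hg.intervalIntegrable a c))
  rw [intervalIntegral.integral_add hh.intervalIntegrable (hg.intervalIntegrable a c)] at hftc
  have hsplit : ∫ x in a..c, g x = (∫ x in a..b, g x) + ∫ x in b..c, g x :=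
    (intervalIntegral.integral_add_adjacent_intervals (hg.intervalIntegrable a b)
      (hg.intervalIntegrable b c)).symm
  have htail : 0 ≤ ∫ x in b..c, g x :=
    intervalIntegral.integral_nonneg hbc fun x hx => hg0 x (hab.trans hx.1)
  have hh_le : |∫ x in a..c, h x| ≤ ∫ x, ‖h x‖ :=
    calc |∫ x in a..c, h x| ≤ ∫ x in Ioc a c, ‖h x‖ := by
          rw [intervalIntegral.integral_of_le hac]; exact abs_integral_le_integral_abs
      _ ≤ ∫ x, ‖h x‖ :=
          setIntegral_le_integral hh.norm (Eventually.of_forall fun _ => norm_nonneg _)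
  linarith [neg_abs_le (∫ x in a..c, h x)]

theorem integral_le_Lp_mul_measureReal_univ_rpow {α : Type*} [MeasurableSpace α]
    {μ : Measure α} [IsFiniteMeasure μ] {f : α → ℝ} {p : ℝ} (hp : 1 < p) (hf0 : 0 ≤ᵐ[μ] f)
    (hf : MemLp f (ENNReal.ofReal p) μ) :
    ∫ x, f x ∂μ ≤ (∫ x, f x ^ p ∂μ) ^ (1 / p) * μ.real univ ^ (1 - 1 / p) := by
  have hpq : p.HolderConjugate p.conjExponent := .conjExponent hp
  have := integral_mul_le_Lp_mul_Lq_of_nonneg hpq hf0 (ae_of_all _ fun _ => zero_le_one)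
    hf (memLp_const 1)
  simp only [mul_one, one_rpow, integral_const, smul_eq_mul] at this
  rwa [one_div p.conjExponent, ← hpq.one_sub_inv, ← one_div] at this

noncomputable def gaussianWeight (ν ξ : ℝ) : ℝ := exp (ξ ^ 2 / (4 * ν))

theorem gaussianWeight_pos (ν ξ : ℝ) : 0 < gaussianWeight ν ξ := exp_pos _

theorem continuous_gaussianWeight (ν : ℝ) : Continuous (gaussianWeight ν) := by
  unfold gaussianWeight; fun_prop

theorem gaussianWeight_neg (ν ξ : ℝ) : gaussianWeight ν (-ξ) = gaussianWeight ν ξ := by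
  simp [gaussianWeight]

theorem hasDerivAt_gaussianWeight (ν ξ : ℝ) :
    HasDerivAt (gaussianWeight ν) (ξ / (2 * ν) * gaussianWeight ν ξ) ξ := by
  have h : HasDerivAt (fun x => exp (x ^ 2 / (4 * ν)))
      (exp (ξ ^ 2 / (4 * ν)) * (2 * ξ / (4 * ν))) ξ := by
    simpa using ((hasDerivAt_pow 2 ξ).div_const (4 * ν)).exp
  exact h.congr_deriv (by unfold gaussianWeight; ring)

theorem gaussianWeight_le_of_abs_le {ν ξ R : ℝ} (hν : 0 < ν) (h : |ξ| ≤ R) :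
    gaussianWeight ν ξ ≤ gaussianWeight ν R := by
  unfold gaussianWeight
  have := sq_le_sq' (abs_le.mp h).1 (abs_le.mp h).2
  gcongr

section GaussianWeightedL2

variable {ν R : ℝ} {u : ℝ → ℝ}

theorem integral_Ioi_sq_mul_gaussianWeight_le (hν : 0 < ν) (hR : 0 < R)
    (hu : Differentiable ℝ u) (hu2 : Integrable fun ξ => u ξ ^ 2 * gaussianWeight ν ξ)
    (hu2' : Integrable fun ξ => deriv u ξ ^ 2 * gaussianWeight ν ξ) :
    ∫ ξ in Ioi R, u ξ ^ 2 * gaussianWeight ν ξ ≤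
      2 * ν / R * ((∫ ξ, u ξ ^ 2 * gaussianWeight ν ξ) +
        ∫ ξ, deriv u ξ ^ 2 * gaussianWeight ν ξ) := by
  set K := gaussianWeight ν
  set h : ℝ → ℝ := fun ξ => 2 * u ξ * deriv u ξ * K ξ
  set g : ℝ → ℝ := fun ξ => u ξ ^ 2 * (ξ / (2 * ν) * K ξ)
  have hderiv : ∀ x, HasDerivAt (fun ξ => u ξ ^ 2 * K ξ) (h x + g x) x := fun x =>
    (((hu x).hasDerivAt.fun_pow 2).mul (hasDerivAt_gaussianWeight ν x)).congr_deriv (by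
      simp only [h, g, K]; push_cast; ring)
  have hh_le : ∀ ξ, ‖h ξ‖ ≤ u ξ ^ 2 * K ξ + deriv u ξ ^ 2 * K ξ := fun ξ => by
    have hK := (gaussianWeight_pos ν ξ).le
    rw [norm_eq_abs, abs_le]
    constructor <;> nlinarith [mul_nonneg hK (sq_nonneg (u ξ + deriv u ξ)),
      mul_nonneg hK (sq_nonneg (u ξ - deriv u ξ))]
  have hh : Integrable h := (hu2.add hu2').mono'
    ((((measurable_const.mul hu.continuous.measurable).mul (measurable_deriv u)).mul
      (continuous_gaussianWeight ν).measurable).aestronglyMeasurable) (ae_of_all _ hh_le)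
  have hg : Continuous g := by
    have := hu.continuous; have := continuous_gaussianWeight ν; fun_prop
  have hg0 : ∀ x, R ≤ x → 0 ≤ g x := fun x hx => by
    have := gaussianWeight_pos ν x
    have : 0 ≤ x := hR.le.trans hx
    positivity
  obtain ⟨hg_int, hg_le⟩ := integrableOn_Ioi_and_integral_le_of_intervalIntegral_le hg hg0
    fun b hb => intervalIntegral_le_integral_norm_of_hasDerivAt hb hu2
      (by have := gaussianWeight_pos ν R; positivity) (fun x _ => hderiv x) hh hg hg0
  calc ∫ ξ in Ioi R, u ξ ^ 2 * K ξ ≤ ∫ ξ in Ioi R, 2 * ν / R * g ξ := by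
        refine setIntegral_mono_on hu2.integrableOn (hg_int.const_mul _) measurableSet_Ioi
          fun x (hx : R < x) => ?_
        have hxR : 2 * ν / R * g x = x / R * (u x ^ 2 * K x) := by
          simp only [g]; field_simp
        rw [hxR]
        exact le_mul_of_one_le_left (by positivity [gaussianWeight_pos ν x])
          ((one_le_div hR).mpr hx.le)
    _ = 2 * ν / R * ∫ ξ in Ioi R, g ξ := integral_const_mul _ _
    _ ≤ 2 * ν / R * ∫ ξ, ‖h ξ‖ := by gcongr
    _ ≤ 2 * ν / R * ((∫ ξ, u ξ ^ 2 * K ξ) + ∫ ξ, deriv u ξ ^ 2 * K ξ) := by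
        rw [← integral_add hu2 hu2']
        exact mul_le_mul_of_nonneg_left (integral_mono hh.norm (hu2.add hu2') hh_le)
          (by positivity)

theorem integral_Iic_sq_mul_gaussianWeight_le (hν : 0 < ν) (hR : 0 < R)
    (hu : Differentiable ℝ u) (hu2 : Integrable fun ξ => u ξ ^ 2 * gaussianWeight ν ξ)
    (hu2' : Integrable fun ξ => deriv u ξ ^ 2 * gaussianWeight ν ξ) :
    ∫ ξ in Iic (-R), u ξ ^ 2 * gaussianWeight ν ξ ≤
      2 * ν / R * ((∫ ξ, u ξ ^ 2 * gaussianWeight ν ξ) +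
        ∫ ξ, deriv u ξ ^ 2 * gaussianWeight ν ξ) := by
  have hw : ∀ ξ, u (-ξ) ^ 2 * gaussianWeight ν ξ = u (-ξ) ^ 2 * gaussianWeight ν (-ξ) :=
    fun ξ => by rw [gaussianWeight_neg]
  have hw' : ∀ ξ, deriv (fun t => u (-t)) ξ ^ 2 * gaussianWeight ν ξ =
      deriv u (-ξ) ^ 2 * gaussianWeight ν (-ξ) :=
    fun ξ => by rw [deriv_comp_neg, neg_sq, gaussianWeight_neg]
  have key := integral_Ioi_sq_mul_gaussianWeight_le (u := fun ξ => u (-ξ)) hν hR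
    (hu.comp differentiable_neg) (by simpa only [hw] using hu2.comp_neg)
    (by simpa only [hw'] using hu2'.comp_neg)
  simp only [hw, hw'] at key
  rwa [integral_comp_neg_Ioi R fun t => u t ^ 2 * gaussianWeight ν t,
    integral_neg_eq_self fun t => u t ^ 2 * gaussianWeight ν t,
    integral_neg_eq_self fun t => deriv u t ^ 2 * gaussianWeight ν t] at key

theorem integral_Ioc_sq_mul_gaussianWeight_le (hν : 0 < ν) (hR : 0 < R) {q : ℝ} (hq : 2 < q)
    (hu : Continuous u) :
    ∫ ξ in Ioc (-R) R, u ξ ^ 2 * gaussianWeight ν ξ ≤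
      gaussianWeight ν R * (2 * R) ^ (1 - 2 / q) * (∫ ξ in Ioo (-R) R, |u ξ| ^ q) ^ (2 / q) := by
  obtain ⟨M, hM⟩ := isCompact_Icc.exists_bound_of_continuousOn (s := Icc (-R) R)
    (hu.pow 2).continuousOn
  have hmem : MemLp (fun ξ => u ξ ^ 2) (ENNReal.ofReal (q / 2)) (volume.restrict (Ioo (-R) R)) :=
    (memLp_top_of_bound (hu.pow 2).aestronglyMeasurable M <|
      (ae_restrict_iff' measurableSet_Ioo).mpr
        (ae_of_all _ fun ξ hξ => hM ξ (Ioo_subset_Icc_self hξ))).mono_exponent le_top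
  have : IsFiniteMeasure (volume.restrict (Ioo (-R) R)) := isFiniteMeasure_restrict.mpr (by simp)
  have hholder := integral_le_Lp_mul_measureReal_univ_rpow (by linarith : 1 < q / 2)
    (ae_of_all _ fun ξ => sq_nonneg (u ξ)) hmem
  have hpow : ∀ ξ, (u ξ ^ 2) ^ (q / 2) = |u ξ| ^ q := fun ξ => by
    rw [← sq_abs, ← rpow_natCast, ← rpow_mul (abs_nonneg _)]
    congr 1; push_cast; ring
  have hexp : 1 / (q / 2) = 2 / q := by field_simp
  have hvol : (volume.restrict (Ioo (-R) R)).real univ = 2 * R := by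
    rw [measureReal_restrict_apply_univ, volume_real_Ioo_of_le (by linarith)]; ring
  simp only [hpow, hexp, hvol] at hholder
  calc ∫ ξ in Ioc (-R) R, u ξ ^ 2 * gaussianWeight ν ξ
      ≤ ∫ ξ in Ioc (-R) R, u ξ ^ 2 * gaussianWeight ν R :=
        setIntegral_mono_on ((hu.pow 2).mul (continuous_gaussianWeight ν)).integrableOn_Ioc
          ((hu.pow 2).mul continuous_const).integrableOn_Ioc measurableSet_Ioc fun ξ hξ =>
            mul_le_mul_of_nonneg_left
              (gaussianWeight_le_of_abs_le hν (abs_le.mpr ⟨hξ.1.le, hξ.2⟩)) (sq_nonneg _)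
    _ = gaussianWeight ν R * ∫ ξ in Ioo (-R) R, u ξ ^ 2 := by
        rw [integral_mul_const, integral_Ioc_eq_integral_Ioo, mul_comm]
    _ ≤ _ := by
        rw [mul_assoc]
        exact mul_le_mul_of_nonneg_left (hholder.trans_eq (mul_comm _ _))
          (gaussianWeight_pos ν R).le

end GaussianWeightedL2

/-- Interpolation-type inequality: for any `q > 2` and `ε > 0` there are
`C > 0`, `R > 0` with `∫ u² K ≤ ε ∫ (u')² K + C (∫_{-R}^R |u|^q)^{2/q}`
for all `u ∈ H¹(K)`, `K ξ = exp (ξ²/(4ν))`. -/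
theorem stmt7 (ν : ℝ) (hν : 0 < ν)
    (K : ℝ → ℝ) (hK : ∀ ξ, K ξ = Real.exp (ξ ^ 2 / (4 * ν)))
    (q : ℝ) (hq : 2 < q) (ε : ℝ) (hε : 0 < ε) :
    ∃ C > (0 : ℝ), ∃ R > (0 : ℝ), ∀ u : ℝ → ℝ, Differentiable ℝ u →
      Integrable (fun ξ => u ξ ^ 2 * K ξ) →
      Integrable (fun ξ => (deriv u ξ) ^ 2 * K ξ) →
      ∫ ξ, u ξ ^ 2 * K ξ
        ≤ ε * (∫ ξ, (deriv u ξ) ^ 2 * K ξ)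
          + C * (∫ ξ in Set.Ioo (-R) R, |u ξ| ^ q) ^ (2 / q) := by
  obtain rfl : K = gaussianWeight ν := funext hK
  set R := 8 * ν + 8 * ν / ε with hR_def
  have hR : 0 < R := by positivity
  have hcoef₁ : 2 * ν / R ≤ 1 / 4 := by
    rw [div_le_iff₀ hR, hR_def]; linarith [div_pos hν hε, mul_div_assoc 8 ν ε]
  have hcoef₂ : 2 * ν / R ≤ ε / 4 := by
    rw [div_le_iff₀ hR, show ε / 4 * R = 2 * ν * ε + 2 * ν by rw [hR_def]; field_simp; ring]
    linarith [mul_pos hν hε]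
  refine ⟨2 * (gaussianWeight ν R * (2 * R) ^ (1 - 2 / q)),
    mul_pos two_pos (mul_pos (gaussianWeight_pos ν R) (rpow_pos_of_pos (by positivity) _)),
    R, hR, fun u hu hu2 hu2' => ?_⟩
  have hsplit : ∫ ξ, u ξ ^ 2 * gaussianWeight ν ξ =
      (∫ ξ in Iic (-R), u ξ ^ 2 * gaussianWeight ν ξ) +
        (∫ ξ in Ioc (-R) R, u ξ ^ 2 * gaussianWeight ν ξ) +
          ∫ ξ in Ioi R, u ξ ^ 2 * gaussianWeight ν ξ := by
    rw [← setIntegral_union (Iic_disjoint_Ioc le_rfl) measurableSet_Ioc hu2.integrableOn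
      hu2.integrableOn, Iic_union_Ioc_eq_Iic (by linarith),
      intervalIntegral.integral_Iic_add_Ioi hu2.integrableOn hu2.integrableOn]
  have hleft := integral_Iic_sq_mul_gaussianWeight_le hν hR hu hu2 hu2'
  have hright := integral_Ioi_sq_mul_gaussianWeight_le hν hR hu hu2 hu2'
  have hmiddle := integral_Ioc_sq_mul_gaussianWeight_le hν hR hq hu.continuous
  have hA : 0 ≤ ∫ ξ, u ξ ^ 2 * gaussianWeight ν ξ :=
    integral_nonneg fun ξ => mul_nonneg (sq_nonneg _) (gaussianWeight_pos ν ξ).le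
  have hB : 0 ≤ ∫ ξ, deriv u ξ ^ 2 * gaussianWeight ν ξ :=
    integral_nonneg fun ξ => mul_nonneg (sq_nonneg _) (gaussianWeight_pos ν ξ).le
  linarith [mul_le_mul_of_nonneg_right hcoef₁ hA, mul_le_mul_of_nonneg_right hcoef₂ hB]
end
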